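/- arXiv:1006.0170 — 4 statements merged into one kernel-verified Lean document; each statement's English description precedes it below -/
import Mathlib

section
/- If c_{j+1} = deg r_j - (deg u_j - 1) ≥ 0 in the EEA with inputs x^{d-1} and S(x), then deg u_j ≤ ⌊(d-1)/2⌋. -/
/-!
The cofactors of the extended Euclidean algorithm satisfy `deg u_j + deg r_{j-1} = deg r_{-1}`:
each step multiplies `u_j` by a quotient of degree `deg r_{j-1} - deg r_j`, and the older
cofactor subtracted from the product has smaller degree. With `deg r_{-1} = d - 1`, the hypothesis
`deg u_j - 1 ≤ deg r_j < deg r_{j-1} = d - 1 - deg u_j` gives `2 deg u_j < d`.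
In Lean the sequences are shifted by one: `r k`, `u k` stand for `r_{k-1}`, `u_{k-1}`.
-/

open Polynomial

namespace Polynomial

theorem natDegree_sub_mul_of_natDegree_le {R : Type*} [Ring R] [NoZeroDivisors R]
    {a b q : R[X]} (hb : b ≠ 0) (hq : 1 ≤ q.natDegree) (hab : a.natDegree ≤ b.natDegree) :
    (a - q * b).natDegree = q.natDegree + b.natDegree := by
  have hqb : (q * b).natDegree = q.natDegree + b.natDegree :=
    natDegree_mul (ne_zero_of_natDegree_gt hq) hb
  rw [natDegree_sub_eq_right_of_natDegree_lt (by omega), hqb]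

end Polynomial

section ExtendedEuclid

variable {R : Type*} [Ring R]

structure IsEuclidCofactorSeq (r q u : ℕ → R[X]) : Prop where
  u_zero : u 0 = 0
  u_one : u 1 = 1
  u_add_two : ∀ j, u (j + 2) = u j - q (j + 1) * u (j + 1)
  one_le_natDegree_quot : ∀ j, r (j + 2) ≠ 0 → 1 ≤ (q (j + 1)).natDegree
  natDegree_rem_lt : ∀ j, r (j + 2) ≠ 0 → (r (j + 2)).natDegree < (r (j + 1)).natDegree
  natDegree_quot_add : ∀ j, r (j + 1) ≠ 0 →
    (q (j + 1)).natDegree + (r (j + 1)).natDegree = (r j).natDegree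

namespace IsEuclidCofactorSeq

variable [NoZeroDivisors R] [Nontrivial R] {r q u : ℕ → R[X]}

theorem cofactor_invariant (h : IsEuclidCofactorSeq r q u) :
    ∀ k, r (k + 1) ≠ 0 → u (k + 1) ≠ 0 ∧ (u k).natDegree ≤ (u (k + 1)).natDegree ∧
      (u (k + 1)).natDegree + (r k).natDegree = (r 0).natDegree
  | 0, _ => by simp [h.u_zero, h.u_one]
  | k + 1, hr => by
    have hr' : r (k + 1) ≠ 0 := ne_zero_of_natDegree_gt (h.natDegree_rem_lt k hr)
    obtain ⟨hu, hmono, hsum⟩ := h.cofactor_invariant k hr'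
    have hq := h.one_le_natDegree_quot k hr
    have hdeg : (u (k + 2)).natDegree = (q (k + 1)).natDegree + (u (k + 1)).natDegree := by
      rw [h.u_add_two k, natDegree_sub_mul_of_natDegree_le hu hq hmono]
    have hstep := h.natDegree_quot_add k hr'
    show u (k + 2) ≠ 0 ∧ _ ≤ (u (k + 2)).natDegree ∧ (u (k + 2)).natDegree + _ = _
    exact ⟨ne_zero_of_natDegree_gt (n := 0) (by omega), by omega, by omega⟩

theorem natDegree_cofactor_add_natDegree_rem (h : IsEuclidCofactorSeq r q u) {k : ℕ}
    (hr : r (k + 1) ≠ 0) : (u (k + 1)).natDegree + (r k).natDegree = (r 0).natDegree :=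
  (h.cofactor_invariant k hr).2.2

end IsEuclidCofactorSeq

end ExtendedEuclid

theorem stmt4_general (F : Type*) [Field F] (d : ℕ)
    (r q u : ℕ → Polynomial F)
    (hr0 : r 0 = (X : Polynomial F) ^ (d - 1))
    (hu0 : u 0 = 0) (hu1 : u 1 = 1)
    (hurec : ∀ j, u (j + 2) = u j - q (j + 1) * u (j + 1))
    (hq1 : ∀ j, r (j + 2) ≠ 0 → 1 ≤ (q (j + 1)).natDegree)
    (hlt : ∀ j, r (j + 2) ≠ 0 → (r (j + 2)).natDegree < (r (j + 1)).natDegree)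
    (hqdeg : ∀ j, r (j + 1) ≠ 0 →
      (q (j + 1)).natDegree + (r (j + 1)).natDegree = (r j).natDegree) :
    ∀ j, 1 ≤ j → r (j + 1) ≠ 0 → r (j + 2) ≠ 0 →
      0 ≤ ((r (j + 1)).natDegree : ℤ) - (((u (j + 1)).natDegree : ℤ) - 1) →
      (u (j + 1)).natDegree ≤ (d - 1) / 2 := by
  rintro j hj hr _ hc
  obtain ⟨k, rfl⟩ : ∃ k, j = k + 1 := ⟨j - 1, by omega⟩
  have hseq : IsEuclidCofactorSeq r q u := ⟨hu0, hu1, hurec, hq1, hlt, hqdeg⟩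
  have hsum := hseq.natDegree_cofactor_add_natDegree_rem hr
  rw [hr0, natDegree_X_pow] at hsum
  have hdrop : (r (k + 1 + 1)).natDegree < (r (k + 1)).natDegree := hlt k hr
  omega

/-- If `c_{j+1} = deg r_j - (deg u_j - 1) ≥ 0` in the EEA with inputs
`x^{d-1}` and `S(x)`, then `deg u_j ≤ ⌊(d-1)/2⌋`, for any `j ≥ 1` with `r_j, r_{j+1}`
nonzero.  (Lean index shift by one; `(d-1)/2` is natural floor division.) -/
theorem stmt4 (F : Type*) [Field F] (d : ℕ) (hd : 2 ≤ d)
    (S : Polynomial F) (hS0 : S ≠ 0) (hS : S.natDegree < d - 1)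
    (r q u : ℕ → Polynomial F)
    (hr0 : r 0 = (X : Polynomial F) ^ (d - 1)) (hr1 : r 1 = S)
    (hrrec : ∀ j, r (j + 2) = r j - q (j + 1) * r (j + 1))
    (hu0 : u 0 = 0) (hu1 : u 1 = 1)
    (hurec : ∀ j, u (j + 2) = u j - q (j + 1) * u (j + 1))
    (hq1 : ∀ j, r (j + 2) ≠ 0 → 1 ≤ (q (j + 1)).natDegree)
    (hlt : ∀ j, r (j + 2) ≠ 0 → (r (j + 2)).natDegree < (r (j + 1)).natDegree)
    (hqdeg : ∀ j, r (j + 1) ≠ 0 →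
      (q (j + 1)).natDegree + (r (j + 1)).natDegree = (r j).natDegree) :
    ∀ j, 1 ≤ j → r (j + 1) ≠ 0 → r (j + 2) ≠ 0 →
      0 ≤ ((r (j + 1)).natDegree : ℤ) - (((u (j + 1)).natDegree : ℤ) - 1) →
      (u (j + 1)).natDegree ≤ (d - 1) / 2 :=
  stmt4_general F d r q u hr0 hu0 hu1 hurec hq1 hlt hqdeg
end

section
/- In the EEA with inputs x^{d-1} and S(x), suppose c_{j+1} = deg r_j - (deg u_j - 1) > 0. If c_{j+1} ≥ deg r_{j-1} - deg r_j + 1, then deg u_{j+1} ≤ ⌊(d-1)/2⌋; if c_{j+1} < deg r_{j-1} - deg r_j + 1, then deg u_{j+1} > ⌊(d-1)/2⌋. -/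
open Polynomial

/-- Lemma 3 of the paper: Suppose `c_{j+1} = deg r_j - (deg u_j - 1) > 0`
in the EEA with inputs `x^{d-1}` and `S(x)`.  If `c_{j+1} ≥ deg r_{j-1} - deg r_j + 1`
then `deg u_{j+1} ≤ ⌊(d-1)/2⌋`; if `c_{j+1} < deg r_{j-1} - deg r_j + 1` then
`deg u_{j+1} > ⌊(d-1)/2⌋`.  (Lean index shift by one; computations in `ℤ`.) -/
theorem stmt5 (F : Type*) [Field F] (d : ℕ) (hd : 2 ≤ d)
    (S : Polynomial F) (hS0 : S ≠ 0) (hS : S.natDegree < d - 1)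
    (r q u : ℕ → Polynomial F)
    (hr0 : r 0 = (X : Polynomial F) ^ (d - 1)) (hr1 : r 1 = S)
    (hrrec : ∀ j, r (j + 2) = r j - q (j + 1) * r (j + 1))
    (hu0 : u 0 = 0) (hu1 : u 1 = 1)
    (hurec : ∀ j, u (j + 2) = u j - q (j + 1) * u (j + 1))
    (hq1 : ∀ j, r (j + 2) ≠ 0 → 1 ≤ (q (j + 1)).natDegree)
    (hlt : ∀ j, r (j + 2) ≠ 0 → (r (j + 2)).natDegree < (r (j + 1)).natDegree)
    (hqdeg : ∀ j, r (j + 1) ≠ 0 →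
      (q (j + 1)).natDegree + (r (j + 1)).natDegree = (r j).natDegree) :
    ∀ j, 1 ≤ j → r (j + 1) ≠ 0 → r (j + 2) ≠ 0 →
      0 < ((r (j + 1)).natDegree : ℤ) - (((u (j + 1)).natDegree : ℤ) - 1) →
      ((((r j).natDegree : ℤ) - ((r (j + 1)).natDegree : ℤ) + 1
          ≤ ((r (j + 1)).natDegree : ℤ) - (((u (j + 1)).natDegree : ℤ) - 1) →
        (u (j + 2)).natDegree ≤ (d - 1) / 2) ∧
       (((r (j + 1)).natDegree : ℤ) - (((u (j + 1)).natDegree : ℤ) - 1)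
          < ((r j).natDegree : ℤ) - ((r (j + 1)).natDegree : ℤ) + 1 →
        (d - 1) / 2 < (u (j + 2)).natDegree)) := by
  -- q (k+1) is nonzero whenever r (k+2) ≠ 0
  have hqne : ∀ k, r (k + 2) ≠ 0 → q (k + 1) ≠ 0 := by
    intro k hk h0
    have := hq1 k hk
    simp [h0] at this
  -- backward nonvanishing
  have lemA : ∀ k, r (k + 1) ≠ 0 → r (k + 2) ≠ 0 → r k ≠ 0 := by
    intro k h1 h2 h0
    have hrec := hrrec k
    rw [h0, zero_sub] at hrec
    have hdeg : (r (k + 2)).natDegree = (q (k + 1)).natDegree + (r (k + 1)).natDegree := by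
      rw [hrec, natDegree_neg, natDegree_mul (hqne k h2) h1]
    have := hlt k h2
    have := hq1 k h2
    omega
  intro j hj hj1 hj2
  -- all r i for i ≤ j+2 are nonzero
  have hall : ∀ i, i ≤ j + 2 → r i ≠ 0 := by
    have haux : ∀ k, k ≤ j → r (j - k) ≠ 0 ∧ r (j - k + 1) ≠ 0 := by
      intro k
      induction k with
      | zero => intro _; simp only [Nat.sub_zero]; exact ⟨lemA j hj1 hj2, hj1⟩
      | succ k ih =>
        intro hk
        have hk' : k ≤ j := by omega
        obtain ⟨h1, h2⟩ := ih hk'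
        have e1 : j - (k + 1) + 1 = j - k := by omega
        have e2 : j - (k + 1) + 2 = j - k + 1 := by omega
        refine ⟨?_, by rwa [e1]⟩
        have := lemA (j - (k + 1)) (by rwa [e1]) (by rwa [e2])
        exact this
    intro i hi
    rcases Nat.lt_or_ge i (j + 1) with h | h
    · have hk : j - (j - i) = i := by omega
      have := (haux (j - i) (by omega)).1
      rwa [hk] at this
    · have : i = j + 1 ∨ i = j + 2 := by omega
      rcases this with h' | h' <;> subst h'
      · exact hj1
      · exact hj2
  -- key invariant: deg u (k+1) + deg r k = d - 1
  have key : ∀ k, (∀ i, i ≤ k + 1 → r i ≠ 0) →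
      u (k + 1) ≠ 0 ∧ (u k).natDegree < (u (k + 1)).natDegree + 1 ∧
      (u (k + 1)).natDegree + (r k).natDegree = d - 1 := by
    intro k
    induction k with
    | zero =>
      intro _
      refine ⟨by simp [hu1], by simp [hu0, hu1], ?_⟩
      simp [hu0, hu1, hr0, natDegree_X_pow]
    | succ k ih =>
      intro h
      simp only [show k + 1 + 1 = k + 2 from rfl]
      obtain ⟨hu_ne, hu_lt, hu_eq⟩ := ih (fun i hi => h i (by omega))
      have hr2 : r (k + 2) ≠ 0 := h (k + 2) le_rfl
      have hr1' : r (k + 1) ≠ 0 := h (k + 1) (by omega)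
      have hqd : 1 ≤ (q (k + 1)).natDegree := hq1 k hr2
      have hq_ne : q (k + 1) ≠ 0 := hqne k hr2
      have hmul : (q (k + 1) * u (k + 1)).natDegree
          = (q (k + 1)).natDegree + (u (k + 1)).natDegree :=
        natDegree_mul hq_ne hu_ne
      have hlt' : (u k).natDegree < (q (k + 1) * u (k + 1)).natDegree := by omega
      have hdeg2 : (u (k + 2)).natDegree
          = (q (k + 1)).natDegree + (u (k + 1)).natDegree := by
        rw [hurec k, natDegree_sub_eq_right_of_natDegree_lt hlt', hmul]
      have hne2 : u (k + 2) ≠ 0 := by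
        intro h0
        have : u k = q (k + 1) * u (k + 1) := by
          have := hurec k
          rw [h0] at this
          linear_combination -this
        rw [this, hmul] at hlt'
        exact lt_irrefl _ hlt'
      have hqr := hqdeg k hr1'
      refine ⟨hne2, by omega, by omega⟩
  have k1 := key j (fun i hi => hall i (by omega))
  have k2 := key (j + 1) (fun i hi => hall i (by omega))
  simp only [show j + 1 + 1 = j + 2 from rfl] at k2
  intro hc
  constructor <;> intro h <;> omega
end

section
/- In the EEA, for any indices i > i_0 ≥ 0, the auxiliary polynomial u_i can be written as a polynomial combination u_i = a'_i · u_{i_0} + a_i · u_{i_0 - 1} where a_i, a'_i are polynomials in the quotients q_{i_0+1},...,q_i; moreover deg a'_i = deg q_{i_0+1} + ... + deg q_i and deg a_i = deg q_{i_0+2} + ... + deg q_i (with the empty sum equal to 0). -/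
open Polynomial

private lemma qne {F : Type*} [Field F] (q : ℕ → Polynomial F)
    (hq : ∀ i, 1 ≤ (q (i + 1)).natDegree) (k : ℕ) : q (k + 1) ≠ 0 := by
  intro h
  have := hq k
  rw [h, natDegree_zero] at this
  omega

/-- For any indices `i > i₀ ≥ 0`, the EEA auxiliary polynomial `u_i` can be
written as `u_i = a'_i u_{i₀} + a_i u_{i₀-1}` with
`deg a'_i = ∑_{k=i₀+1}^{i} deg q_k` and `deg a_i = ∑_{k=i₀+2}^{i} deg q_k`
(empty sum = 0).  (Lean index shift: `u (j+1)` is the paper's `u_j`; `q k` is `q_k`.) -/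
theorem stmt7 (F : Type*) [Field F] (q u : ℕ → Polynomial F)
    (hu0 : u 0 = 0) (hu1 : u 1 = 1)
    (hurec : ∀ j, u (j + 2) = u j - q (j + 1) * u (j + 1))
    (hq : ∀ i, 1 ≤ (q (i + 1)).natDegree) :
    ∀ i i₀ : ℕ, i₀ < i →
      ∃ a a' : Polynomial F,
        u (i + 1) = a' * u (i₀ + 1) + a * u i₀ ∧
        a'.natDegree = ∑ k ∈ Finset.Icc (i₀ + 1) i, (q k).natDegree ∧
        a.natDegree = ∑ k ∈ Finset.Icc (i₀ + 2) i, (q k).natDegree := by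
  intro i i₀ hi
  obtain ⟨n, rfl⟩ : ∃ n, i = i₀ + n + 1 := ⟨i - i₀ - 1, by omega⟩
  set A' : ℕ → ℕ := fun m => ∑ k ∈ Finset.Icc (i₀ + 1) m, (q k).natDegree with hA'
  set A : ℕ → ℕ := fun m => ∑ k ∈ Finset.Icc (i₀ + 2) m, (q k).natDegree with hA
  have hA'mono : ∀ m m', m ≤ m' → A' m ≤ A' m' := fun m m' h =>
    Finset.sum_le_sum_of_subset (Finset.Icc_subset_Icc_right h)
  have hAmono : ∀ m m', m ≤ m' → A m ≤ A m' := fun m m' h =>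
    Finset.sum_le_sum_of_subset (Finset.Icc_subset_Icc_right h)
  have hA'step : ∀ m, i₀ + 1 ≤ m + 1 → A' (m + 1) = A' m + (q (m + 1)).natDegree :=
    fun m hm => Finset.sum_Icc_succ_top hm _
  have hAstep : ∀ m, i₀ + 2 ≤ m + 1 → A (m + 1) = A m + (q (m + 1)).natDegree :=
    fun m hm => Finset.sum_Icc_succ_top hm _
  suffices h : ∀ n : ℕ, ∃ a b a' b' : Polynomial F,
      u (i₀ + n + 1) = b' * u (i₀ + 1) + b * u i₀ ∧
      u (i₀ + n + 2) = a' * u (i₀ + 1) + a * u i₀ ∧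
      a' ≠ 0 ∧ a ≠ 0 ∧
      a'.natDegree = A' (i₀ + n + 1) ∧ a.natDegree = A (i₀ + n + 1) ∧
      b'.natDegree ≤ A' (i₀ + n) ∧ b.natDegree ≤ A (i₀ + n) by
    obtain ⟨a, b, a', b', h1, h2, ha'0, ha0, hda', hda, _, _⟩ := h n
    exact ⟨a, a', by rw [show i₀ + n + 1 + 1 = i₀ + n + 2 from rfl]; exact h2, hda', hda⟩
  intro n
  induction n with
  | zero =>
    refine ⟨1, 0, -q (i₀ + 1), 1, by simp, ?_, ?_, one_ne_zero, ?_, ?_, ?_, ?_⟩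
    · rw [show i₀ + 0 + 2 = i₀ + 2 from rfl, hurec i₀]; ring
    · simpa using qne q hq i₀
    · rw [natDegree_neg, hA']
      simp [Finset.Icc_self]
    · rw [natDegree_one]
      show 0 = ∑ k ∈ Finset.Icc (i₀ + 2) (i₀ + 0 + 1), (q k).natDegree
      rw [Finset.Icc_eq_empty (by omega), Finset.sum_empty]
    · simp [hA']
    · simp [hA]
  | succ n ih =>
    obtain ⟨a, b, a', b', h1, h2, ha'0, ha0, hda', hda, hdb', hdb⟩ := ih
    have hqne : q (i₀ + n + 2) ≠ 0 := qne q hq (i₀ + n + 1)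
    have hq1 : 1 ≤ (q (i₀ + n + 2)).natDegree := hq (i₀ + n + 1)
    have haux' : A' (i₀ + n + 2) = A' (i₀ + n + 1) + (q (i₀ + n + 2)).natDegree :=
      hA'step (i₀ + n + 1) (by omega)
    have haux : A (i₀ + n + 2) = A (i₀ + n + 1) + (q (i₀ + n + 2)).natDegree :=
      hAstep (i₀ + n + 1) (by omega)
    have hmul' : (q (i₀ + n + 2) * a').natDegree
        = (q (i₀ + n + 2)).natDegree + A' (i₀ + n + 1) := by
      rw [natDegree_mul hqne ha'0, hda']
    have hmul : (q (i₀ + n + 2) * a).natDegree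
        = (q (i₀ + n + 2)).natDegree + A (i₀ + n + 1) := by
      rw [natDegree_mul hqne ha0, hda]
    have hlt' : b'.natDegree < (q (i₀ + n + 2) * a').natDegree := by
      rw [hmul']
      have := hA'mono (i₀ + n) (i₀ + n + 1) (by omega)
      omega
    have hlt : b.natDegree < (q (i₀ + n + 2) * a).natDegree := by
      rw [hmul]
      have := hAmono (i₀ + n) (i₀ + n + 1) (by omega)
      omega
    have hna' : (b' - q (i₀ + n + 2) * a').natDegree = A' (i₀ + n + 2) := by
      rw [natDegree_sub_eq_right_of_natDegree_lt hlt', hmul', haux']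
      omega
    have hna : (b - q (i₀ + n + 2) * a).natDegree = A (i₀ + n + 2) := by
      rw [natDegree_sub_eq_right_of_natDegree_lt hlt, hmul, haux]
      omega
    have hA'pos : 1 ≤ A' (i₀ + n + 2) := by
      rw [haux']; omega
    have hApos : 1 ≤ A (i₀ + n + 2) := by
      rw [haux]; omega
    refine ⟨b - q (i₀ + n + 2) * a, a, b' - q (i₀ + n + 2) * a', a', h2, ?_, ?_, ?_,
      hna', hna, le_of_eq hda', le_of_eq hda⟩
    · have := hurec (i₀ + n + 1)
      rw [show i₀ + n + 1 + 2 = i₀ + (n + 1) + 2 from by ring,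
        show i₀ + n + 1 + 1 = i₀ + n + 2 from rfl] at this
      rw [this, h1, h2]; ring
    · intro h0
      rw [h0, natDegree_zero] at hna'
      omega
    · intro h0
      rw [h0, natDegree_zero] at hna
      omega
end

section
/- In the EEA with inputs x^{d-1} and S, if j is the smallest index with deg u_j > deg r_j, and the error polynomial e has t ≤ ⌊(d-1)/2⌋ nonzero coefficients with error locator Λ(x) (the monic polynomial of degree t whose roots are exactly the inverse error locations) satisfying -Ω(x) ≡ Λ(x)S(x) mod x^{d-1} with deg Ω < t, then u_j is a scalar multiple of Λ and deg u_j = t. -/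
open Polynomial

/-- Sugiyama: In the EEA with inputs `x^{d-1}` and `S`, let `j` be the
smallest index with `deg u_j > deg r_j`.  If there are `Λ, Ω` with `Λ` monic,
`deg Λ = t ≤ ⌊(d-1)/2⌋`, `deg Ω < t`, `gcd(Λ, Ω) = 1` and `Λ S ≡ -Ω (mod x^{d-1})`,
then `u_j` is a nonzero scalar multiple of `Λ` (so `deg u_j = t`) and `r_j` the
corresponding multiple of `-Ω`.
(Lean index shift: `r (j+1)`, `u (j+1)` are the paper's `r_j`, `u_j`.) -/
theorem stmt19 (F : Type*) [Field F] (d t : ℕ) (hd : 2 ≤ d)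
    (S Λ Ω : Polynomial F) (hS : S.natDegree < d - 1)
    (hmonic : Λ.Monic) (hΛt : Λ.natDegree = t) (ht : t ≤ (d - 1) / 2)
    (hΩ : Ω.degree < (t : ℕ)) (hcop : IsCoprime Λ Ω)
    (hkey : (X : Polynomial F) ^ (d - 1) ∣ Λ * S + Ω)
    (r q u : ℕ → Polynomial F)
    (hr0 : r 0 = (X : Polynomial F) ^ (d - 1)) (hr1 : r 1 = S)
    (hq : ∀ j, q (j + 1) = r j / r (j + 1))
    (hrrec : ∀ j, r (j + 2) = r j - q (j + 1) * r (j + 1))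
    (hu0 : u 0 = 0) (hu1 : u 1 = 1)
    (hurec : ∀ j, u (j + 2) = u j - q (j + 1) * u (j + 1))
    (j : ℕ)
    (hj : (r (j + 1)).degree < (u (j + 1)).degree)
    (hjmin : ∀ k, k < j → ¬ (r (k + 1)).degree < (u (k + 1)).degree) :
    ∃ c : F, c ≠ 0 ∧ u (j + 1) = Polynomial.C c * Λ ∧
      r (j + 1) = -(Polynomial.C c) * Ω ∧ (u (j + 1)).natDegree = t := by
  set D := d - 1 with hDdef
  have hD1 : 1 ≤ D := by omega
  have hΛ0 : Λ ≠ 0 := hmonic.ne_zero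
  -- invariant: r n = v * X^D + u n * S
  have hinv : ∀ n, ∃ v : Polynomial F, r n = v * X ^ D + u n * S := by
    have H : ∀ n, (∃ v : Polynomial F, r n = v * X ^ D + u n * S) ∧
        (∃ v : Polynomial F, r (n + 1) = v * X ^ D + u (n + 1) * S) := by
      intro n
      induction n with
      | zero =>
        constructor
        · exact ⟨1, by rw [hr0, hu0]; ring⟩
        · exact ⟨0, by rw [hr1, hu1]; ring⟩
      | succ n ih =>
        refine ⟨ih.2, ?_⟩
        obtain ⟨v1, hv1⟩ := ih.1
        obtain ⟨v2, hv2⟩ := ih.2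
        exact ⟨v1 - q (n + 1) * v2, by rw [hrrec n, hurec n, hv1, hv2]; ring⟩
    exact fun n => (H n).1
  -- main EEA induction
  have key : ∀ n, n ≤ j → r n ≠ 0 ∧ u (n + 1) ≠ 0 ∧
      (u (n + 1)).natDegree + (r n).natDegree = D ∧
      ∀ m, m < n → (r n).degree < (r m).degree := by
    intro n
    induction n using Nat.strong_induction_on with
    | _ n IH =>
      match n with
      | 0 =>
        intro _
        refine ⟨by rw [hr0]; exact pow_ne_zero _ X_ne_zero, by rw [hu1]; exact one_ne_zero,
          ?_, fun m hm => absurd hm (Nat.not_lt_zero m)⟩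
        rw [hu1, hr0, natDegree_one, natDegree_X_pow]
        omega
      | (n + 1) =>
        intro hn1
        have hnj : n < j := by omega
        obtain ⟨hrn, hun1, hsum, hdec⟩ := IH n (by omega) (by omega)
        -- r (n+1) ≠ 0
        have hrn1 : r (n + 1) ≠ 0 := by
          intro h0
          apply hjmin n hnj
          rw [h0, degree_zero, degree_eq_natDegree hun1]
          exact WithBot.bot_lt_coe _
        -- degree decrease at n+1 vs n
        have hdecn : (r (n + 1)).degree < (r n).degree := by
          match n with
          | 0 =>
            rw [hr1, hr0, degree_X_pow, degree_eq_natDegree (hr1 ▸ hrn1)]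
            exact_mod_cast hS
          | (k + 1) =>
            have hmod : r k % r (k + 1) = r (k + 2) := by
              rw [EuclideanDomain.mod_eq_sub_mul_div, hrrec k, hq k]; ring
            have := EuclideanDomain.mod_lt (r k) hrn
            rwa [hmod] at this
        have hdec' : ∀ m, m < n + 1 → (r (n + 1)).degree < (r m).degree := by
          intro m hm
          rcases Nat.lt_or_ge m n with h | h
          · exact hdecn.trans (hdec m h)
          · have : m = n := by omega
            rw [this]; exact hdecn
        -- the quotient
        have hq1 : (r (n + 1)).degree + (q (n + 1)).degree = (r n).degree := by
          rw [hq n]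
          exact degree_add_div hrn1 (le_of_lt hdecn)
        have hqne : q (n + 1) ≠ 0 := by
          intro h0
          rw [h0, degree_zero, WithBot.add_bot] at hq1
          exact hrn (degree_eq_bot.mp hq1.symm)
        have hqsum : (r (n + 1)).natDegree + (q (n + 1)).natDegree = (r n).natDegree := by
          rw [degree_eq_natDegree hrn1, degree_eq_natDegree hqne, degree_eq_natDegree hrn]
            at hq1
          exact_mod_cast hq1
        -- degree of q*u(n+1)
        have hqune : q (n + 1) * u (n + 1) ≠ 0 := mul_ne_zero hqne hun1
        have hqundeg : (q (n + 1) * u (n + 1)).natDegree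
            = (q (n + 1)).natDegree + (u (n + 1)).natDegree := natDegree_mul hqne hun1
        -- u (n+2)
        have hun2deg : (u (n + 2)).degree = (q (n + 1) * u (n + 1)).degree := by
          rw [hurec n]
          apply degree_sub_eq_right_of_degree_lt
          rcases n with _ | k
          ·
            rw [hu0, degree_zero, degree_eq_natDegree hqune]
            exact WithBot.bot_lt_coe _
          · obtain ⟨hrk, huk1, hsumk, _⟩ := IH k (by omega) (by omega)
            have hrdlt : (r (k + 1 + 1)).natDegree < (r k).natDegree := by
              have h1 := hdec' k (by omega)
              rw [degree_eq_natDegree hrn1, degree_eq_natDegree hrk] at h1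
              exact_mod_cast h1
            have : (u (k + 1)).natDegree < (q (k + 1 + 1) * u (k + 1 + 1)).natDegree := by
              rw [hqundeg]; omega
            rw [degree_eq_natDegree huk1, degree_eq_natDegree hqune]
            exact_mod_cast this
        have hun2 : u (n + 2) ≠ 0 := by
          intro h0
          rw [h0, degree_zero] at hun2deg
          exact hqune (degree_eq_bot.mp hun2deg.symm)
        refine ⟨hrn1, hun2, ?_, hdec'⟩
        have : (u (n + 2)).natDegree = (q (n + 1) * u (n + 1)).natDegree := by
          rw [degree_eq_natDegree hun2, degree_eq_natDegree hqune] at hun2deg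
          exact_mod_cast hun2deg
        rw [this, hqundeg]
        omega
  obtain ⟨hrj, huj1, hsumj, _⟩ := key j le_rfl
  obtain ⟨W, hW⟩ := hkey
  -- generic: the combination Λ * r n + Ω * u n is divisible by X^D
  have hcomb : ∀ n, (X : Polynomial F) ^ D ∣ Λ * r n + Ω * u n := by
    intro n
    obtain ⟨v, hv⟩ := hinv n
    refine ⟨Λ * v + u n * W, ?_⟩
    rw [hv]
    calc Λ * (v * X ^ D + u n * S) + Ω * u n
        = Λ * v * X ^ D + u n * (Λ * S + Ω) := by ring
      _ = X ^ D * (Λ * v + u n * W) := by rw [hW]; ring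
  have hΩt : Ω ≠ 0 → Ω.natDegree < t := by
    intro h
    rwa [← natDegree_lt_iff_degree_lt h] at hΩ
  -- a zero criterion
  have hzero : ∀ p : Polynomial F, (X : Polynomial F) ^ D ∣ p → p.degree < (D : ℕ) → p = 0 := by
    intro p hdvd hdeg
    by_contra hp0
    have := degree_le_of_dvd hdvd hp0
    rw [degree_X_pow] at this
    exact absurd (lt_of_le_of_lt this hdeg) (lt_irrefl _)
  -- Claim 1: D ≤ (r j).natDegree + t
  have hclaim1 : D ≤ (r j).natDegree + t := by
    by_contra hcon
    push_neg at hcon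
    -- deg u j ≤ deg r j
    have hujrj : (u j).degree ≤ (r j).degree := by
      match j with
      | 0 => rw [hu0, degree_zero]; exact bot_le
      | (k + 1) => exact not_lt.mp (hjmin k (by omega))
    have hP0 : Λ * r j + Ω * u j = 0 := by
      apply hzero _ (hcomb j)
      apply lt_of_le_of_lt (degree_add_le _ _)
      apply max_lt
      · rw [degree_mul, degree_eq_natDegree hΛ0, degree_eq_natDegree hrj, hΛt,
          ← Nat.cast_add]
        exact_mod_cast (by omega : t + (r j).natDegree < D)
      · rcases eq_or_ne (Ω * u j) 0 with h | h
        · rw [h, degree_zero]; exact WithBot.bot_lt_coe _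
        · have hΩ0 : Ω ≠ 0 := fun h0 => h (by rw [h0, zero_mul])
          have huj0 : u j ≠ 0 := fun h0 => h (by rw [h0, mul_zero])
          have h1 : (u j).natDegree ≤ (r j).natDegree := by
            rw [degree_eq_natDegree huj0, degree_eq_natDegree hrj] at hujrj
            exact_mod_cast hujrj
          rw [degree_mul, degree_eq_natDegree hΩ0, degree_eq_natDegree huj0,
            ← Nat.cast_add]
          exact_mod_cast (by have := hΩt hΩ0; omega : Ω.natDegree + (u j).natDegree < D)
    -- contradiction from degrees
    have heq : Λ * r j = -(Ω * u j) := by linear_combination hP0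
    have hne : Λ * r j ≠ 0 := mul_ne_zero hΛ0 hrj
    have hΩ0 : Ω ≠ 0 := by
      intro h0; rw [h0, zero_mul, neg_zero] at heq; exact hne heq
    have huj0 : u j ≠ 0 := by
      intro h0; rw [h0, mul_zero, neg_zero] at heq; exact hne heq
    have hdegeq : t + (r j).natDegree = Ω.natDegree + (u j).natDegree := by
      have := congrArg natDegree heq
      rwa [natDegree_neg, natDegree_mul hΛ0 hrj, natDegree_mul hΩ0 huj0, hΛt] at this
    have h1 : (u j).natDegree ≤ (r j).natDegree := by
      rw [degree_eq_natDegree huj0, degree_eq_natDegree hrj] at hujrj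
      exact_mod_cast hujrj
    have := hΩt hΩ0
    omega
  -- so deg u (j+1) ≤ t
  have hujt : (u (j + 1)).natDegree ≤ t := by omega
  have h2t : 2 * t ≤ D := by omega
  -- Claim 2
  have hQ0 : Λ * r (j + 1) + Ω * u (j + 1) = 0 := by
    apply hzero _ (hcomb (j + 1))
    apply lt_of_le_of_lt (degree_add_le _ _)
    apply max_lt
    · rcases eq_or_ne (r (j + 1)) 0 with h | h
      · rw [h, mul_zero, degree_zero]; exact WithBot.bot_lt_coe _
      · have hrd : (r (j + 1)).natDegree < (u (j + 1)).natDegree := by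
          rw [degree_eq_natDegree h, degree_eq_natDegree huj1] at hj
          exact_mod_cast hj
        rw [degree_mul, degree_eq_natDegree hΛ0, degree_eq_natDegree h, hΛt,
          ← Nat.cast_add]
        exact_mod_cast (by omega : t + (r (j + 1)).natDegree < D)
    · rcases eq_or_ne Ω 0 with h | h
      · rw [h, zero_mul, degree_zero]; exact WithBot.bot_lt_coe _
      · rw [degree_mul, degree_eq_natDegree h, degree_eq_natDegree huj1, ← Nat.cast_add]
        exact_mod_cast (by have := hΩt h; omega : Ω.natDegree + (u (j + 1)).natDegree < D)
  have heq : Λ * r (j + 1) = -(Ω * u (j + 1)) := by linear_combination hQ0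
  have hdvd : Λ ∣ Ω * u (j + 1) := ⟨-(r (j + 1)), by linear_combination hQ0⟩
  have hdvdu : Λ ∣ u (j + 1) := hcop.dvd_of_dvd_mul_left hdvd
  obtain ⟨g, hg⟩ := hdvdu
  have hg0 : g ≠ 0 := by
    intro h0; rw [h0, mul_zero] at hg; exact huj1 hg
  have hgdeg : g.natDegree = 0 := by
    have := congrArg natDegree hg
    rw [natDegree_mul hΛ0 hg0, hΛt] at this
    omega
  obtain ⟨c, hc⟩ : ∃ c, g = C c := ⟨g.coeff 0, (eq_C_of_natDegree_eq_zero hgdeg)⟩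
  have hc0 : c ≠ 0 := by
    intro h0; rw [h0, C_0] at hc; exact hg0 hc
  refine ⟨c, hc0, by rw [hg, hc]; ring, ?_, ?_⟩
  · apply mul_left_cancel₀ hΛ0
    rw [heq, hg, hc]; ring
  · rw [hg, hc, natDegree_mul hΛ0 (hc ▸ hg0), hΛt, natDegree_C]
    omega
end
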